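/- arXiv:2004.05012 — 4 statements merged into one kernel-verified Lean document; each statement's English description precedes it below -/
import Mathlib

section
/- Let n ≥ 1 and define the n×n rational matrix E by E_{ij} = min(i,j)·(n+1−max(i,j))/(n+1) for 1 ≤ i, j ≤ n (this is the Gram matrix (ω_i,ω_j) of the fundamental weights of type A_n). Then E_{ij}·E_{kk} ≥ E_{ik}·E_{kj} for all 1 ≤ i, j, k ≤ n. -/
/-- The Gram matrix `E_{ij} = min(i,j)·(n+1−max(i,j))/(n+1)` of the fundamental weights of
type `A_n` (indices `1,…,n` realized as `Fin n` with one-based value `i.val + 1`) satisfies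
`E_{ij}·E_{kk} ≥ E_{ik}·E_{kj}` for all `i, j, k`. -/
theorem stmt1 (n : ℕ) (hn : 1 ≤ n)
    (E : Matrix (Fin n) (Fin n) ℚ)
    (hE : ∀ i j : Fin n, E i j =
      (min (i.val + 1) (j.val + 1) : ℚ) *
        ((n : ℚ) + 1 - (max (i.val + 1) (j.val + 1) : ℚ)) / ((n : ℚ) + 1)) :
    ∀ i j k : Fin n, E i j * E k k ≥ E i k * E k j := by
  intro i j k
  rw [hE, hE, hE, hE]
  push_cast
  set N : ℚ := (n : ℚ) + 1 with hNdef
  have hN : (0 : ℚ) < N := by positivity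
  set a : ℚ := (i.val : ℚ) + 1 with ha
  set b : ℚ := (j.val : ℚ) + 1 with hb
  set c : ℚ := (k.val : ℚ) + 1 with hc
  have ha0 : 0 ≤ a := by positivity
  have hb0 : 0 ≤ b := by positivity
  have hc0 : 0 ≤ c := by positivity
  have hNa : 0 ≤ N - a := by
    have : (i.val : ℚ) + 1 ≤ (n : ℚ) := by exact_mod_cast Nat.succ_le_of_lt i.isLt
    simp only [ha, hNdef]; linarith
  have hNb : 0 ≤ N - b := by
    have : (j.val : ℚ) + 1 ≤ (n : ℚ) := by exact_mod_cast Nat.succ_le_of_lt j.isLt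
    simp only [hb, hNdef]; linarith
  have hNc : 0 ≤ N - c := by
    have : (k.val : ℚ) + 1 ≤ (n : ℚ) := by exact_mod_cast Nat.succ_le_of_lt k.isLt
    simp only [hc, hNdef]; linarith
  rw [ge_iff_le, div_mul_div_comm, div_mul_div_comm]
  rw [div_le_div_iff_of_pos_right (by positivity)]
  simp only [min_self, max_self]
  rcases le_total a c with h1 | h1
  · rcases le_total c b with h2 | h2
    · -- a ≤ c ≤ b
      rw [min_eq_left h1, max_eq_right h1, min_eq_left h2, max_eq_right h2,
        min_eq_left (h1.trans h2), max_eq_right (h1.trans h2)]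
      nlinarith [mul_nonneg (mul_nonneg ha0 hNb) (mul_nonneg hN.le hc0)]
    · rcases le_total a b with h3 | h3
      · -- a ≤ b ≤ c
        rw [min_eq_left h1, max_eq_right h1, min_eq_right h2, max_eq_left h2,
          min_eq_left h3, max_eq_right h3]
        nlinarith [mul_nonneg (mul_nonneg ha0 hNc) (mul_nonneg hN.le (sub_nonneg.2 h2))]
      · -- b ≤ a ≤ c
        rw [min_eq_left h1, max_eq_right h1, min_eq_right h2, max_eq_left h2,
          min_eq_right h3, max_eq_left h3]
        nlinarith [mul_nonneg (mul_nonneg hb0 hNc) (mul_nonneg hN.le (sub_nonneg.2 h1))]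
  · rcases le_total c b with h2 | h2
    · rcases le_total a b with h3 | h3
      · -- c ≤ a ≤ b
        rw [min_eq_right h1, max_eq_left h1, min_eq_left h2, max_eq_right h2,
          min_eq_left h3, max_eq_right h3]
        nlinarith [mul_nonneg (mul_nonneg hc0 hNb) (mul_nonneg hN.le (sub_nonneg.2 h1))]
      · -- c ≤ b ≤ a
        rw [min_eq_right h1, max_eq_left h1, min_eq_left h2, max_eq_right h2,
          min_eq_right h3, max_eq_left h3]
        nlinarith [mul_nonneg (mul_nonneg hc0 hNa) (mul_nonneg hN.le (sub_nonneg.2 h2))]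
    · -- b ≤ c ≤ a
      rw [min_eq_right h1, max_eq_left h1, min_eq_right h2, max_eq_left h2,
        min_eq_right (h2.trans h1), max_eq_left (h2.trans h1)]
      nlinarith [mul_nonneg (mul_nonneg hb0 hNa) (mul_nonneg hN.le hc0)]
end

section
/- Let n ≥ 4 and define the n×n rational matrix M by: M_{ij} = min(i,j) whenever i ≤ n−2 or j ≤ n−2; M_{n−1,n−1} = M_{n,n} = n; and M_{n−1,n} = M_{n,n−1} = n−2. Then M_{ij}·M_{kk} ≥ M_{ik}·M_{kj} for all 1 ≤ i, j, k ≤ n. -/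
/-- For `n ≥ 4`, the `n×n` rational matrix `M` with `M_{ij} = min(i,j)` whenever
`i ≤ n−2` or `j ≤ n−2`, `M_{n−1,n−1} = M_{n,n} = n` and `M_{n−1,n} = M_{n,n−1} = n−2`
(this is, up to rescaling, the Gram matrix of the fundamental weights of type `D_n`)
satisfies `M_{ij}·M_{kk} ≥ M_{ik}·M_{kj}` for all `i, j, k`.  Indices `1,…,n` are
realized as `Fin n` with one-based value `i.val + 1`. -/
theorem stmt3 (n : ℕ) (hn : 4 ≤ n)
    (M : Matrix (Fin n) (Fin n) ℚ)
    (hM : ∀ i j : Fin n, M i j =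
      if i.val + 1 ≤ n - 2 ∨ j.val + 1 ≤ n - 2 then
        (min (i.val + 1) (j.val + 1) : ℚ)
      else if i = j then (n : ℚ)
      else (n : ℚ) - 2) :
    ∀ i j k : Fin n, M i j * M k k ≥ M i k * M k j := by
  intro i j k
  have hi := i.2
  have hj := j.2
  have hk := k.2
  have hn4 : (4:ℚ) ≤ (n:ℚ) := by exact_mod_cast hn
  by_cases hks : k.1 + 1 ≤ n - 2
  · -- k small
    have ekk : M k k = ((k.1 + 1 : ℕ) : ℚ) := by
      rw [hM, if_pos (Or.inl hks), min_self]; push_cast; ring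
    have eik : M i k = ((min (i.1+1) (k.1+1) : ℕ) : ℚ) := by
      rw [hM, if_pos (Or.inr hks)]; push_cast; rfl
    have ekj : M k j = ((min (k.1+1) (j.1+1) : ℕ) : ℚ) := by
      rw [hM, if_pos (Or.inl hks)]; push_cast; rfl
    by_cases hs : i.1 + 1 ≤ n - 2 ∨ j.1 + 1 ≤ n - 2
    · have eij : M i j = ((min (i.1+1) (j.1+1) : ℕ) : ℚ) := by rw [hM, if_pos hs]; push_cast; rfl
      rw [eij, ekk, eik, ekj]
      have key : min (i.1+1) (k.1+1) * min (k.1+1) (j.1+1)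
          ≤ min (i.1+1) (j.1+1) * (k.1+1) := by
        rcases le_total (i.1+1) (j.1+1) with h | h
        · exact Nat.mul_le_mul (by omega) (by omega)
        · calc min (i.1+1) (k.1+1) * min (k.1+1) (j.1+1)
              ≤ (k.1+1) * min (i.1+1) (j.1+1) := Nat.mul_le_mul (by omega) (by omega)
            _ = min (i.1+1) (j.1+1) * (k.1+1) := mul_comm _ _
      exact_mod_cast key
    · push_neg at hs
      obtain ⟨his, hjs⟩ := hs
      have eij : M i j = if i = j then (n : ℚ) else (n : ℚ) - 2 := by
        rw [hM, if_neg (by push_neg; omega)]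
      have m1 : min (i.1+1) (k.1+1) = k.1+1 := by omega
      have m2 : min (k.1+1) (j.1+1) = k.1+1 := by omega
      rw [eij, ekk, eik, ekj, m1, m2]
      have hc : ((k.1+1 : ℕ) : ℚ) ≤ (n:ℚ) - 2 := by
        have h2 : (k.1+1) + 2 ≤ n := by omega
        have := (Nat.cast_le (α := ℚ)).2 h2
        push_cast at this ⊢
        linarith
      have hc0 : (0:ℚ) ≤ ((k.1+1 : ℕ) : ℚ) := Nat.cast_nonneg _
      split_ifs <;> nlinarith
  · -- k big
    have ekk : M k k = (n : ℚ) := by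
      rw [hM, if_neg (by push_neg; omega), if_pos rfl]
    by_cases his : i.1 + 1 ≤ n - 2 <;> by_cases hjs : j.1 + 1 ≤ n - 2
    · -- i, j small
      have eij : M i j = ((min (i.1+1) (j.1+1) : ℕ) : ℚ) := by
        rw [hM, if_pos (Or.inl his)]; push_cast; rfl
      have eik : M i k = ((i.1+1 : ℕ) : ℚ) := by
        rw [hM, if_pos (Or.inl his)]; push_cast; exact min_eq_left (by exact_mod_cast (show i.1+1 ≤ k.1+1 by omega))
      have ekj : M k j = ((j.1+1 : ℕ) : ℚ) := by
        rw [hM, if_pos (Or.inr hjs)]; push_cast; exact min_eq_right (by exact_mod_cast (show j.1+1 ≤ k.1+1 by omega))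
      rw [eij, ekk, eik, ekj]
      have key : (i.1+1) * (j.1+1) ≤ min (i.1+1) (j.1+1) * n := by
        rcases le_total (i.1+1) (j.1+1) with h | h
        · rw [min_eq_left h]; exact Nat.mul_le_mul (Nat.le_refl _) (by omega)
        · rw [min_eq_right h]
          calc (i.1+1) * (j.1+1) = (j.1+1) * (i.1+1) := mul_comm _ _
            _ ≤ (j.1+1) * n := Nat.mul_le_mul (Nat.le_refl _) (by omega)
      exact_mod_cast key
    · -- i small, j big
      have eij : M i j = ((i.1+1 : ℕ) : ℚ) := by
        rw [hM, if_pos (Or.inl his)]; push_cast; exact min_eq_left (by exact_mod_cast (show i.1+1 ≤ j.1+1 by omega))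
      have eik : M i k = ((i.1+1 : ℕ) : ℚ) := by
        rw [hM, if_pos (Or.inl his)]; push_cast; exact min_eq_left (by exact_mod_cast (show i.1+1 ≤ k.1+1 by omega))
      have ekj : M k j = if k = j then (n : ℚ) else (n : ℚ) - 2 := by
        rw [hM, if_neg (by push_neg; omega)]
      rw [eij, ekk, eik, ekj]
      have hc0 : (0:ℚ) ≤ ((i.1+1 : ℕ) : ℚ) := Nat.cast_nonneg _
      split_ifs <;> nlinarith
    · -- i big, j small
      have eij : M i j = ((j.1+1 : ℕ) : ℚ) := by
        rw [hM, if_pos (Or.inr hjs)]; push_cast; exact min_eq_right (by exact_mod_cast (show j.1+1 ≤ i.1+1 by omega))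
      have ekj : M k j = ((j.1+1 : ℕ) : ℚ) := by
        rw [hM, if_pos (Or.inr hjs)]; push_cast; exact min_eq_right (by exact_mod_cast (show j.1+1 ≤ k.1+1 by omega))
      have eik : M i k = if i = k then (n : ℚ) else (n : ℚ) - 2 := by
        rw [hM, if_neg (by push_neg; omega)]
      rw [eij, ekk, eik, ekj]
      have hc0 : (0:ℚ) ≤ ((j.1+1 : ℕ) : ℚ) := Nat.cast_nonneg _
      split_ifs <;> nlinarith
    · -- all big
      have eij : M i j = if i = j then (n : ℚ) else (n : ℚ) - 2 := by
        rw [hM, if_neg (by push_neg; omega)]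
      have eik : M i k = if i = k then (n : ℚ) else (n : ℚ) - 2 := by
        rw [hM, if_neg (by push_neg; omega)]
      have ekj : M k j = if k = j then (n : ℚ) else (n : ℚ) - 2 := by
        rw [hM, if_neg (by push_neg; omega)]
      rw [eij, ekk, eik, ekj]
      by_cases h2 : i = k <;> by_cases h3 : k = j
      · simp only [if_pos h2, if_pos h3, if_pos (h2.trans h3)]; nlinarith
      · simp only [if_pos h2, if_neg h3,
          if_neg (show i ≠ j from fun h => h3 (h2.symm.trans h))]; nlinarith
      · simp only [if_neg h2, if_pos h3,
          if_neg (show i ≠ j from fun h => h2 (h.trans h3.symm))]; nlinarith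
      · simp only [if_neg h2, if_neg h3]; split_ifs <;> nlinarith
end

section
/- Let D be an n×n real matrix with all entries strictly positive such that D_{ij}·D_{kk} ≥ D_{ik}·D_{kj} for all 1 ≤ i, j, k ≤ n. Let a_1, …, a_n be non-negative real numbers, let m ≥ 0 be real, and set c_i = Σ_{l=1}^{n} a_l·D_{li} for each i. If c_k ≥ m·D_{kk} for some index k, then c_i ≥ m·D_{ki} for every i ∈ {1,…,n}. -/
/-- Let `D` be an `n×n` real matrix with strictly positive entries such that
`D_{ij}·D_{kk} ≥ D_{ik}·D_{kj}` for all `i, j, k`, let `a_1,…,a_n ≥ 0`, `m ≥ 0`, and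
set `c_i = Σ_l a_l·D_{li}`.  If `c_k ≥ m·D_{kk}` for some `k`, then `c_i ≥ m·D_{ki}`
for every `i`. -/
theorem stmt6 (n : ℕ) (D : Matrix (Fin n) (Fin n) ℝ)
    (hpos : ∀ i j, 0 < D i j)
    (hineq : ∀ i j k, D i j * D k k ≥ D i k * D k j)
    (a : Fin n → ℝ) (ha : ∀ l, 0 ≤ a l)
    (m : ℝ) (hm : 0 ≤ m)
    (c : Fin n → ℝ) (hc : ∀ i, c i = ∑ l, a l * D l i)
    (k : Fin n) (hk : c k ≥ m * D k k) :
    ∀ i, c i ≥ m * D k i := by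
  intro i
  have hkk : 0 < D k k := hpos k k
  rw [ge_iff_le, ← mul_le_mul_iff_of_pos_right hkk]
  have h1 : c i * D k k = ∑ l, a l * (D l i * D k k) := by
    rw [hc]; rw [Finset.sum_mul]; simp [mul_assoc]
  have h2 : c k * D k i = ∑ l, a l * (D l k * D k i) := by
    rw [hc]; rw [Finset.sum_mul]; simp [mul_assoc]
  have h3 : c k * D k i ≤ c i * D k k := by
    rw [h1, h2]
    apply Finset.sum_le_sum
    intro l _
    exact mul_le_mul_of_nonneg_left (hineq l i k) (ha l)
  calc m * D k i * D k k = m * D k k * D k i := by ring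
    _ ≤ c k * D k i := mul_le_mul_of_nonneg_right hk (hpos k i).le
    _ ≤ c i * D k k := h3
end

section
/- Let Φ be an irreducible, reduced, crystallographic root system in a finite-dimensional real inner product space E whose inner product ( , ) is invariant under the Weyl group of Φ (equivalently, Φ is the root system of a finite-dimensional simple complex Lie algebra). Let α_1, …, α_n be a base of Φ (a set of simple roots) and let ω_1, …, ω_n ∈ E be the fundamental weights, determined by 2(ω_i, α_j) = δ_{ij}·(α_j, α_j). Then (ω_i, ω_j)·(ω_k, ω_k) ≥ (ω_i, ω_k)·(ω_k, ω_j) for all 1 ≤ i, j, k ≤ n. -/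
open scoped RealInnerProductSpace

/-- Let `Φ` be an irreducible, reduced, crystallographic root system in a
finite-dimensional real inner product space `E`: `Φ` is a finite set of non-zero
vectors spanning `E`, closed under the associated reflections, with all Cartan
integers `2(α,β)/(β,β)` integral, with `±α` the only multiples of each root `α` in
`Φ`, and not partitionable into two non-empty mutually orthogonal subsets.  Let
`α_1,…,α_n` be a base of `Φ` (a basis of `E` consisting of roots such that every root
is an integral combination of the `α_i` with coefficients all of one sign) and let
`ω_1,…,ω_n` be the fundamental weights, determined by `2(ω_i,α_j) = δ_{ij}(α_j,α_j)`.
Then `(ω_i,ω_j)·(ω_k,ω_k) ≥ (ω_i,ω_k)·(ω_k,ω_j)` for all `i, j, k`. -/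
theorem stmt18 {E : Type*} [NormedAddCommGroup E] [InnerProductSpace ℝ E]
    [FiniteDimensional ℝ E]
    (Φ : Finset E)
    (h0 : (0 : E) ∉ Φ)
    (hspan : Submodule.span ℝ (Φ : Set E) = ⊤)
    (hrefl : ∀ α ∈ Φ, ∀ β ∈ Φ, β - (2 * ⟪β, α⟫ / ⟪α, α⟫) • α ∈ Φ)
    (hcrys : ∀ α ∈ Φ, ∀ β ∈ Φ, ∃ z : ℤ, 2 * ⟪α, β⟫ / ⟪β, β⟫ = (z : ℝ))
    (hred : ∀ α ∈ Φ, ∀ t : ℝ, t • α ∈ Φ → t = 1 ∨ t = -1)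
    (hirr : ∀ S : Set E, S ⊆ (Φ : Set E) →
      (∀ a ∈ S, ∀ b ∈ (Φ : Set E) \ S, ⟪a, b⟫ = 0) → S = ∅ ∨ S = (Φ : Set E))
    (n : ℕ) (α : Fin n → E)
    (hmem : ∀ i, α i ∈ Φ)
    (hli : LinearIndependent ℝ α)
    (hsp : Submodule.span ℝ (Set.range α) = ⊤)
    (hbase : ∀ β ∈ Φ, ∃ c : Fin n → ℤ,
      β = ∑ i, (c i : ℝ) • α i ∧ ((∀ i, 0 ≤ c i) ∨ (∀ i, c i ≤ 0)))
    (ω : Fin n → E)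
    (hω : ∀ i j : Fin n, 2 * ⟪ω i, α j⟫ = if i = j then ⟪α j, α j⟫ else 0) :
    ∀ i j k : Fin n, ⟪ω i, ω j⟫ * ⟪ω k, ω k⟫ ≥ ⟪ω i, ω k⟫ * ⟪ω k, ω j⟫ := by
  have hαne : ∀ i : Fin n, α i ≠ 0 := fun i h => h0 (h ▸ hmem i)
  have hpos : ∀ x : E, x ≠ 0 → (0:ℝ) < ⟪x, x⟫ := fun x hx =>
    lt_of_le_of_ne real_inner_self_nonneg (fun h => hx (inner_self_eq_zero.mp h.symm))
  have hαpos : ∀ i : Fin n, (0:ℝ) < ⟪α i, α i⟫ := fun i => hpos _ (hαne i)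
  -- Step 1: distinct simple roots have nonpositive inner products
  have hneg : ∀ i j : Fin n, i ≠ j → ⟪α i, α j⟫ ≤ 0 := by
    intro i j hij
    by_contra hpos
    push_neg at hpos
    set c : ℝ := 2 * ⟪α i, α j⟫ / ⟪α j, α j⟫ with hc
    have hcpos : 0 < c := div_pos (by linarith) (hαpos j)
    have hβ : α i - c • α j ∈ Φ := hrefl (α j) (hmem j) (α i) (hmem i)
    obtain ⟨d, hd, hsign⟩ := hbase _ hβ
    set e : Fin n → ℝ :=
      fun l => (if l = i then (1:ℝ) else 0) - (if l = j then c else 0) with he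
    have hsum : ∑ l, e l • α l = α i - c • α j := by
      simp only [he, sub_smul]
      rw [Finset.sum_sub_distrib]
      congr 1
      · rw [Finset.sum_eq_single i (fun l _ hl => by rw [if_neg hl, zero_smul])
          (fun h => absurd (Finset.mem_univ i) h), if_pos rfl, one_smul]
      · rw [Finset.sum_eq_single j (fun l _ hl => by rw [if_neg hl, zero_smul])
          (fun h => absurd (Finset.mem_univ j) h), if_pos rfl]
    have heq : ∀ l, (d l : ℝ) = e l := by
      have h0' : ∑ l, ((d l : ℝ) - e l) • α l = 0 := by
        simp only [sub_smul, Finset.sum_sub_distrib, ← hd, hsum, sub_self]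
      intro l
      have := (Fintype.linearIndependent_iff.mp hli) _ h0' l
      linarith
    have hdi : (d i : ℝ) = 1 := by
      have := heq i; simpa [he, hij] using this
    have hdj : (d j : ℝ) = -c := by
      have := heq j; simpa [he, Ne.symm hij] using this
    rcases hsign with h | h
    · have := h j
      have : (0:ℝ) ≤ (d j : ℝ) := by exact_mod_cast this
      linarith
    · have := h i
      have : (d i : ℝ) ≤ 0 := by exact_mod_cast this
      linarith
  -- Key M-matrix lemma
  have hkey : ∀ c : Fin n → ℝ,
      (∀ m, c m < 0 → 0 ≤ ⟪α m, ∑ l, c l • α l⟫) → ∀ l, 0 ≤ c l := by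
    intro c hc
    by_contra hcon
    push_neg at hcon
    set v := ∑ l, c l • α l with hv
    set cm : Fin n → ℝ := fun l => max (-(c l)) 0 with hcm
    set cp : Fin n → ℝ := fun l => max (c l) 0 with hcp
    have hcmnn : ∀ l, 0 ≤ cm l := fun l => le_max_right _ _
    have hcpnn : ∀ l, 0 ≤ cp l := fun l => le_max_right _ _
    have hcmz : ∀ l, 0 ≤ c l → cm l = 0 := by
      intro l h; simp only [hcm]; exact max_eq_right (by linarith)
    have hcpz : ∀ l, c l ≤ 0 → cp l = 0 := by
      intro l h; simp only [hcp]; exact max_eq_right h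
    have hsplit : ∀ l, cp l - cm l = c l := by
      intro l
      rcases le_or_gt 0 (c l) with h | h
      · rw [hcmz l h]; simp only [hcp]; rw [max_eq_left h]; ring
      · rw [hcpz l h.le]; simp only [hcm]; rw [max_eq_left (by linarith)]; ring
    set vm := ∑ l, cm l • α l with hvm
    set vp := ∑ l, cp l • α l with hvp
    have hvv : vp - vm = v := by
      rw [hvm, hvp, ← Finset.sum_sub_distrib, hv]
      exact Finset.sum_congr rfl fun l _ => by rw [← sub_smul, hsplit]
    have h1 : 0 ≤ ⟪vm, v⟫ := by
      rw [hvm, sum_inner]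
      apply Finset.sum_nonneg
      intro l _
      rw [real_inner_smul_left]
      rcases lt_or_ge (c l) 0 with h | h
      · exact mul_nonneg (hcmnn l) (hc l h)
      · rw [hcmz l h]; simp
    have h2 : ⟪vm, vp⟫ ≤ 0 := by
      rw [hvm, sum_inner]
      apply Finset.sum_nonpos
      intro l _
      rw [real_inner_smul_left, hvp, inner_sum, Finset.mul_sum]
      apply Finset.sum_nonpos
      intro m _
      rw [real_inner_smul_right]
      rcases eq_or_ne l m with rfl | hlm
      · rcases le_or_gt 0 (c l) with h | h
        · rw [hcmz l h]; simp
        · rw [hcpz l h.le]; simp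
      · have := hneg l m hlm
        have h3 : cp m * ⟪α l, α m⟫ ≤ 0 := mul_nonpos_of_nonneg_of_nonpos (hcpnn m) this
        exact mul_nonpos_of_nonneg_of_nonpos (hcmnn l) h3
    have h3 : ⟪vm, vm⟫ ≤ 0 := by
      have h4 : ⟪vm, v⟫ = ⟪vm, vp⟫ - ⟪vm, vm⟫ := by
        rw [← hvv, inner_sub_right]
      linarith
    have hvm0 : vm = 0 := by
      have := real_inner_self_nonneg (x := vm)
      exact inner_self_eq_zero.mp (le_antisymm h3 this)
    obtain ⟨l0, hl0⟩ := hcon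
    have hz : cm l0 = 0 :=
      (Fintype.linearIndependent_iff.mp hli) cm (by rw [← hvm, hvm0]) l0
    have : cm l0 = -(c l0) := by simp only [hcm]; exact max_eq_left (by linarith)
    linarith
  -- inner products of weights with simple roots
  have hωα : ∀ i l : Fin n, ⟪ω i, α l⟫ = if i = l then ⟪α l, α l⟫ / 2 else 0 := by
    intro i l
    have h2 := hω i l
    by_cases h : i = l
    · rw [if_pos h] at h2 ⊢; linarith
    · rw [if_neg h] at h2 ⊢; linarith
  have hinner : ∀ (m : Fin n) (c : Fin n → ℝ),
      ⟪ω m, ∑ l, c l • α l⟫ = c m * (⟪α m, α m⟫ / 2) := by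
    intro m c
    rw [inner_sum, Finset.sum_eq_single m]
    · rw [real_inner_smul_right, hωα m m, if_pos rfl]
    · intro l _ hlm
      rw [real_inner_smul_right, hωα m l, if_neg (Ne.symm hlm), mul_zero]
    · intro h; exact absurd (Finset.mem_univ m) h
  -- coordinates
  have hB : ∀ v : E, ∃ c : Fin n → ℝ, v = ∑ l, c l • α l := by
    intro v
    have hv : v ∈ Submodule.span ℝ (Set.range α) := by rw [hsp]; trivial
    obtain ⟨c, hcv⟩ := (Submodule.mem_span_range_iff_exists_fun ℝ).mp hv
    exact ⟨c, hcv.symm⟩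
  intro i j k
  have hωk : (0:ℝ) < ⟪ω k, ω k⟫ := by
    apply hpos
    intro h
    have := hω k k
    rw [h] at this
    simp only [inner_zero_left, if_pos rfl, mul_zero] at this
    exact absurd this.symm (ne_of_gt (hαpos k))
  set t : ℝ := ⟪ω k, ω j⟫ / ⟪ω k, ω k⟫ with ht
  set w : E := ω j - t • ω k with hw
  obtain ⟨c, hcw⟩ := hB w
  have hkw : ⟪ω k, w⟫ = 0 := by
    rw [hw, inner_sub_right, real_inner_smul_right, ht]
    field_simp
    ring
  have hck : c k = 0 := by
    rw [hcw, hinner] at hkw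
    rcases mul_eq_zero.mp hkw with h | h
    · exact h
    · exact absurd h (ne_of_gt (by have := hαpos k; linarith))
  have hcnn : ∀ l, 0 ≤ c l := by
    apply hkey
    intro m hm
    rw [← hcw]
    have hmk : m ≠ k := fun h => by rw [h, hck] at hm; exact lt_irrefl 0 hm
    rw [hw, inner_sub_right, real_inner_smul_right, real_inner_comm (ω j) (α m),
      real_inner_comm (ω k) (α m), hωα j m, hωα k m, if_neg (Ne.symm hmk), mul_zero,
      sub_zero]
    rcases eq_or_ne j m with rfl | h
    · rw [if_pos rfl]; linarith [hαpos j]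
    · rw [if_neg h]
  have hfin : 0 ≤ ⟪ω i, w⟫ := by
    rw [hcw, hinner]
    have h1 := hαpos i
    have h2 := hcnn i
    nlinarith
  rw [hw, inner_sub_right, real_inner_smul_right, ht] at hfin
  rw [ge_iff_le, ← sub_nonneg]
  have hne : ⟪ω k, ω k⟫ ≠ 0 := ne_of_gt hωk
  have : ⟪ω i, ω j⟫ * ⟪ω k, ω k⟫ - ⟪ω i, ω k⟫ * ⟪ω k, ω j⟫ =
      (⟪ω i, ω j⟫ - ⟪ω k, ω j⟫ / ⟪ω k, ω k⟫ * ⟪ω i, ω k⟫) * ⟪ω k, ω k⟫ := by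
    field_simp
  rw [this]
  exact mul_nonneg hfin hωk.le
end
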